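/- arXiv:2303.07268 — 2 statements merged into one kernel-verified Lean document; each statement's English description precedes it below -/
import Mathlib

section
/- Let Ψ : ℝ → ℝ be the bump function Ψ(s) = exp(1 + 1/(s²−1)) for |s| < 1 and Ψ(s) = 0 for |s| ≥ 1, and define u_R : ℝ × ℝ → ℝ by u_R(x,t) = (2/3)[Ψ((5/2)(x−2t)+1/4) + Ψ((5/2)(x+2t)−21/4)] + (2/9)[Ψ((5/2)(x−2t)+11/4) + Ψ((5/2)(x+2t)−31/4)]. Then u_R satisfies the wave equation with speed 2, ∂ₜₜu_R(x,t) = 4·∂ₓₓu_R(x,t), for all (x,t) ∈ ℝ²; moreover for every x ∈ [1/2,1] one has u_R(x,0) = 0 and ∂ₜu_R(x,0) = 0. -/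
/-!
`u_R(x,t) = F(x - 2t) + G(x + 2t)` is a superposition of a right-moving and a left-moving
wave with smooth profiles `F` and `G`, so d'Alembert's computation gives `∂ₜₜu_R = 4 ∂ₓₓu_R`:
the second derivative of `s ↦ f(as + b)` is `a² f''(as + b)`, with no smoothness needed since
affine reparametrisations commute with `deriv`. Moreover `F` vanishes on `[3/10, ∞)` and `G` on
`(-∞, 17/10]`, so `u_R` vanishes identically near `t = 0` above every `x ∈ [1/2, 1]`, which kills
both initial data there.
-/

/-- The bump function `Ψ(s) = exp(1 + 1/(s²−1))` on `(−1,1)`, extended by zero. -/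
noncomputable def Psi (s : ℝ) : ℝ :=
  if |s| < 1 then Real.exp (1 + 1 / (s ^ 2 - 1)) else 0

open Filter Topology
open scoped ContDiff

lemma Psi_eq_exp_one_mul_expNegInvGlue :
    Psi = fun s => Real.exp 1 * expNegInvGlue (1 - s ^ 2) := by
  funext s
  unfold Psi expNegInvGlue
  rcases lt_or_ge |s| 1 with hs | hs
  · have hs2 : s ^ 2 < 1 := by nlinarith [abs_lt.mp hs]
    rw [if_pos hs, if_neg (by linarith), ← Real.exp_add, one_div, ← neg_sub, inv_neg]
  · have hs2 : 1 ≤ s ^ 2 := by nlinarith [sq_abs s, abs_nonneg s]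
    rw [if_neg hs.not_gt, if_pos (by linarith), mul_zero]

lemma contDiff_Psi : ContDiff ℝ ∞ Psi := by
  rw [Psi_eq_exp_one_mul_expNegInvGlue]
  exact contDiff_const.mul (expNegInvGlue.contDiff.comp (by fun_prop))

lemma Psi_eq_zero {s : ℝ} (hs : 1 ≤ |s|) : Psi s = 0 := if_neg hs.not_gt

lemma deriv_comp_mul_add (f : ℝ → ℝ) (a b : ℝ) :
    deriv (fun s => f (a * s + b)) = fun s => a * deriv f (a * s + b) := by
  funext s
  exact (deriv_comp_mul_left a (fun y => f (y + b)) s).trans (by rw [deriv_comp_add_const]; rfl)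

lemma deriv_deriv_comp_mul_add (f : ℝ → ℝ) (a b : ℝ) :
    deriv (deriv fun s => f (a * s + b)) = fun s => a ^ 2 * deriv (deriv f) (a * s + b) := by
  rw [deriv_comp_mul_add, deriv_const_mul_field', deriv_comp_mul_add]
  funext s
  ring

lemma deriv_deriv_add {f g : ℝ → ℝ} (hf : ContDiff ℝ 2 f) (hg : ContDiff ℝ 2 g) (t : ℝ) :
    deriv (deriv fun s => f s + g s) t = deriv (deriv f) t + deriv (deriv g) t := by
  have h := iteratedDeriv_add hf.contDiffAt hg.contDiffAt (n := 2) (x := t)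
  simp only [iteratedDeriv_succ, iteratedDeriv_zero] at h
  exact h

theorem deriv_deriv_travelingWaves {F G : ℝ → ℝ} (hF : ContDiff ℝ 2 F) (hG : ContDiff ℝ 2 G)
    (c x t : ℝ) :
    deriv (deriv fun s => F (x - c * s) + G (x + c * s)) t
      = c ^ 2 * deriv (deriv fun y => F (y - c * t) + G (y + c * t)) x := by
  have hF' (a b : ℝ) : ContDiff ℝ 2 fun s => F (a * s + b) := hF.comp (by fun_prop)
  have hG' (a b : ℝ) : ContDiff ℝ 2 fun s => G (a * s + b) := hG.comp (by fun_prop)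
  have htime : (fun s => F (x - c * s) + G (x + c * s))
      = fun s => F (-c * s + x) + G (c * s + x) := by funext s; ring_nf
  have hspace : (fun y => F (y - c * t) + G (y + c * t))
      = fun y => F (1 * y + -(c * t)) + G (1 * y + c * t) := by funext y; ring_nf
  rw [htime, hspace, deriv_deriv_add (hF' _ _) (hG' _ _), deriv_deriv_add (hF' _ _) (hG' _ _),
    deriv_deriv_comp_mul_add, deriv_deriv_comp_mul_add, deriv_deriv_comp_mul_add,
    deriv_deriv_comp_mul_add]
  ring_nf

theorem travelingWaves_initial_eq_zero {F G : ℝ → ℝ} {x : ℝ} (hF : F =ᶠ[𝓝 x] 0)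
    (hG : G =ᶠ[𝓝 x] 0) (c : ℝ) :
    F (x - c * 0) + G (x + c * 0) = 0 ∧ deriv (fun s => F (x - c * s) + G (x + c * s)) 0 = 0 := by
  have hzero : (fun s => F (x - c * s) + G (x + c * s)) =ᶠ[𝓝 0] fun _ => 0 := by
    have hl : Tendsto (fun s : ℝ => x - c * s) (𝓝 0) (𝓝 x) :=
      (by fun_prop : Continuous fun s : ℝ => x - c * s).tendsto' 0 x (by simp)
    have hr : Tendsto (fun s : ℝ => x + c * s) (𝓝 0) (𝓝 x) :=
      (by fun_prop : Continuous fun s : ℝ => x + c * s).tendsto' 0 x (by simp)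
    filter_upwards [hl.eventually hF, hr.eventually hG] with s hFs hGs
    simp [hFs, hGs]
  exact ⟨hzero.self_of_nhds, hzero.deriv_eq.trans (deriv_const 0 0)⟩

noncomputable def rightMovingWave (y : ℝ) : ℝ :=
  (2 / 3) * Psi ((5 / 2) * y + 1 / 4) + (2 / 9) * Psi ((5 / 2) * y + 11 / 4)

noncomputable def leftMovingWave (y : ℝ) : ℝ :=
  (2 / 3) * Psi ((5 / 2) * y - 21 / 4) + (2 / 9) * Psi ((5 / 2) * y - 31 / 4)

lemma contDiff_rightMovingWave : ContDiff ℝ ∞ rightMovingWave := by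
  have := contDiff_Psi
  unfold rightMovingWave
  fun_prop

lemma contDiff_leftMovingWave : ContDiff ℝ ∞ leftMovingWave := by
  have := contDiff_Psi
  unfold leftMovingWave
  fun_prop

lemma rightMovingWave_eq_zero {y : ℝ} (hy : 3 / 10 ≤ y) : rightMovingWave y = 0 := by
  rw [rightMovingWave, Psi_eq_zero (le_abs.2 (.inl (by linarith))),
    Psi_eq_zero (le_abs.2 (.inl (by linarith)))]
  ring

lemma leftMovingWave_eq_zero {y : ℝ} (hy : y ≤ 17 / 10) : leftMovingWave y = 0 := by
  rw [leftMovingWave, Psi_eq_zero (le_abs.2 (.inr (by linarith))),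
    Psi_eq_zero (le_abs.2 (.inr (by linarith)))]
  ring

/-- Right part of the exact solution of the transmission problem with piecewise-constant
velocity: `u_R` solves the wave equation with speed 2 on ℝ², and on `[1/2,1]` it has
vanishing initial data `u_R(x,0) = 0` and `∂ₜu_R(x,0) = 0`. -/
theorem transmission_right_solution (uR : ℝ → ℝ → ℝ)
    (huR : ∀ x t, uR x t =
      (2 / 3) * (Psi ((5 / 2) * (x - 2 * t) + 1 / 4) + Psi ((5 / 2) * (x + 2 * t) - 21 / 4))
        + (2 / 9) * (Psi ((5 / 2) * (x - 2 * t) + 11 / 4)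
            + Psi ((5 / 2) * (x + 2 * t) - 31 / 4))) :
    (∀ x t : ℝ,
      deriv (deriv (fun s => uR x s)) t = 4 * deriv (deriv (fun y => uR y t)) x) ∧
    (∀ x ∈ Set.Icc (1 / 2 : ℝ) 1,
      uR x 0 = 0 ∧ deriv (fun s => uR x s) 0 = 0) := by
  obtain rfl : uR = fun x t => rightMovingWave (x - 2 * t) + leftMovingWave (x + 2 * t) := by
    funext x t
    rw [huR, rightMovingWave, leftMovingWave]
    ring
  refine ⟨fun x t => ?_, fun x ⟨hx₁, hx₂⟩ => ?_⟩
  · rw [deriv_deriv_travelingWaves (contDiff_infty.1 contDiff_rightMovingWave 2)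
      (contDiff_infty.1 contDiff_leftMovingWave 2)]
    norm_num
  · have hright : rightMovingWave =ᶠ[𝓝 x] 0 :=
      eventually_of_mem (Ioi_mem_nhds (by linarith)) fun _ hy => rightMovingWave_eq_zero hy.le
    have hleft : leftMovingWave =ᶠ[𝓝 x] 0 :=
      eventually_of_mem (Iio_mem_nhds (by linarith)) fun _ hy => leftMovingWave_eq_zero hy.le
    simpa using travelingWaves_initial_eq_zero hright hleft 2
end

section
/- Let Ψ : ℝ → ℝ be the bump function Ψ(s) = exp(1 + 1/(s²−1)) for |s| < 1 and Ψ(s) = 0 for |s| ≥ 1, and let u_L(x,t) = Ψ(5(x−t)−1) − (1/3)Ψ(5(x+t)−4) − (1/3)Ψ(5(x−t)+4) − (8/9)Ψ(5(x+t)−13/2) and u_R(x,t) = (2/3)[Ψ((5/2)(x−2t)+1/4) + Ψ((5/2)(x+2t)−21/4)] + (2/9)[Ψ((5/2)(x−2t)+11/4) + Ψ((5/2)(x+2t)−31/4)]. Then the homogeneous Neumann boundary conditions hold at the endpoints of the spatial domain: ∂ₓu_L(0,t) = 0 for every t ∈ [0,1], and ∂ₓu_R(1,t) = 0 for every t ∈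 [0,1]. -/
noncomputable def dPsi (s : ℝ) : ℝ :=
  Real.exp 1 * (((1 - s ^ 2)⁻¹ ^ 2 * expNegInvGlue (1 - s ^ 2)) * (-(2 * s)))

lemma psi_eq (s : ℝ) : Psi s = Real.exp 1 * expNegInvGlue (1 - s ^ 2) := by
  unfold Psi
  by_cases h : |s| < 1
  · have h2 : s ^ 2 < 1 := by
      have := abs_nonneg s
      nlinarith [sq_abs s]
    have h3 : ¬(1 - s ^ 2 ≤ 0) := by linarith
    rw [if_pos h]
    simp only [expNegInvGlue, if_neg h3, ← Real.exp_add]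
    congr 1
    rw [one_div, show s ^ 2 - 1 = -(1 - s ^ 2) by ring, inv_neg]
  · rw [if_neg h]
    have h2 : 1 ≤ |s| := not_lt.mp h
    have h3 : 1 - s ^ 2 ≤ 0 := by nlinarith [sq_abs s, abs_nonneg s]
    rw [expNegInvGlue.zero_of_nonpos h3, mul_zero]

lemma expNegInvGlue_hasDerivAt (x : ℝ) :
    HasDerivAt expNegInvGlue ((x⁻¹) ^ 2 * expNegInvGlue x) x := by
  have := expNegInvGlue.hasDerivAt_polynomial_eval_inv_mul 1 x
  simpa using this

lemma psi_hasDerivAt (s : ℝ) : HasDerivAt Psi (dPsi s) s := by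
  have hinner : HasDerivAt (fun s : ℝ => 1 - s ^ 2) (-(2 * s)) s := by
    have := (hasDerivAt_pow 2 s).const_sub 1
    simpa using this
  have houter := (expNegInvGlue_hasDerivAt (1 - s ^ 2)).const_mul (Real.exp 1)
  have := (houter.comp s hinner)
  have h2 : HasDerivAt Psi
      (Real.exp 1 * ((1 - s ^ 2)⁻¹ ^ 2 * expNegInvGlue (1 - s ^ 2)) * -(2 * s)) s := by
    refine this.congr_of_eventuallyEq (Filter.Eventually.of_forall fun x => ?_)
    simp [Function.comp, psi_eq]
  convert h2 using 1
  unfold dPsi; ring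

lemma dPsi_neg (s : ℝ) : dPsi (-s) = -dPsi s := by
  unfold dPsi; ring_nf

lemma dPsi_zero {s : ℝ} (h : s ≤ -1) : dPsi s = 0 := by
  have : 1 - s ^ 2 ≤ 0 := by nlinarith
  unfold dPsi
  rw [expNegInvGlue.zero_of_nonpos this]
  ring

/-- The exact solution pair `(u_L, u_R)` of the transmission problem with piecewise-constant
velocity satisfies homogeneous Neumann boundary conditions at the endpoints of `(0,1)`:
`∂ₓu_L(0,t) = 0` and `∂ₓu_R(1,t) = 0` for all `t ∈ [0,1]`. -/
theorem transmission_neumann_boundary (uL uR : ℝ → ℝ → ℝ)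
    (huL : ∀ x t, uL x t =
      Psi (5 * (x - t) - 1) - (1 / 3) * Psi (5 * (x + t) - 4)
        - (1 / 3) * Psi (5 * (x - t) + 4) - (8 / 9) * Psi (5 * (x + t) - 13 / 2))
    (huR : ∀ x t, uR x t =
      (2 / 3) * (Psi ((5 / 2) * (x - 2 * t) + 1 / 4) + Psi ((5 / 2) * (x + 2 * t) - 21 / 4))
        + (2 / 9) * (Psi ((5 / 2) * (x - 2 * t) + 11 / 4)
            + Psi ((5 / 2) * (x + 2 * t) - 31 / 4))) :
    ∀ t ∈ Set.Icc (0 : ℝ) 1,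
      deriv (fun y => uL y t) 0 = 0 ∧ deriv (fun y => uR y t) 1 = 0 := by
  intro t ht
  obtain ⟨ht0, ht1⟩ := ht
  have aff : ∀ (a b x : ℝ), HasDerivAt (fun y : ℝ => a * (y + b)) a x := by
    intro a b x
    simpa using ((hasDerivAt_id x).add_const b).const_mul a
  have comp : ∀ (a b x : ℝ) (c : ℝ),
      HasDerivAt (fun y : ℝ => Psi (a * (y + b) + c)) (dPsi (a * (x + b) + c) * a) x := by
    intro a b x c
    exact (psi_hasDerivAt (a * (x + b) + c)).comp x ((aff a b x).add_const c)
  constructor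
  · have h1 : (fun y => uL y t) = fun y =>
        Psi (5 * (y + (-t)) + (-1)) - (1 / 3) * Psi (5 * (y + t) + (-4))
          - (1 / 3) * Psi (5 * (y + (-t)) + 4) - (8 / 9) * Psi (5 * (y + t) + (-13 / 2)) := by
      funext y; rw [huL y t]; ring_nf
    have hd : HasDerivAt (fun y => uL y t)
        (dPsi (5 * (0 + (-t)) + (-1)) * 5
          - (1 / 3) * (dPsi (5 * (0 + t) + (-4)) * 5)
          - (1 / 3) * (dPsi (5 * (0 + (-t)) + 4) * 5)
          - (8 / 9) * (dPsi (5 * (0 + t) + (-13 / 2)) * 5)) 0 := by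
      rw [h1]
      exact (((comp 5 (-t) 0 (-1)).sub ((comp 5 t 0 (-4)).const_mul (1/3))).sub
        ((comp 5 (-t) 0 4).const_mul (1/3))).sub ((comp 5 t 0 (-13/2)).const_mul (8/9))
    rw [hd.deriv]
    have e1 : dPsi (5 * (0 + (-t)) + (-1)) = 0 := by
      apply dPsi_zero; linarith
    have e4 : dPsi (5 * (0 + t) + (-13 / 2)) = 0 := by
      apply dPsi_zero; linarith
    have e23 : dPsi (5 * (0 + (-t)) + 4) = -dPsi (5 * (0 + t) + (-4)) := by
      have : 5 * (0 + (-t)) + 4 = -(5 * (0 + t) + (-4)) := by ring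
      rw [this, dPsi_neg]
    rw [e1, e4, e23]; ring
  · have h1 : (fun y => uR y t) = fun y =>
        (2 / 3) * (Psi ((5 / 2) * (y + (-2 * t)) + 1 / 4) + Psi ((5 / 2) * (y + 2 * t) + (-21 / 4)))
          + (2 / 9) * (Psi ((5 / 2) * (y + (-2 * t)) + 11 / 4)
              + Psi ((5 / 2) * (y + 2 * t) + (-31 / 4))) := by
      funext y; rw [huR y t]; ring_nf
    have hd : HasDerivAt (fun y => uR y t)
        ((2 / 3) * (dPsi ((5 / 2) * (1 + (-2 * t)) + 1 / 4) * (5 / 2)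
            + dPsi ((5 / 2) * (1 + 2 * t) + (-21 / 4)) * (5 / 2))
          + (2 / 9) * (dPsi ((5 / 2) * (1 + (-2 * t)) + 11 / 4) * (5 / 2)
            + dPsi ((5 / 2) * (1 + 2 * t) + (-31 / 4)) * (5 / 2))) 1 := by
      rw [h1]
      exact (((comp (5/2) (-2*t) 1 (1/4)).add (comp (5/2) (2*t) 1 (-21/4))).const_mul (2/3)).add
        ((((comp (5/2) (-2*t) 1 (11/4)).add (comp (5/2) (2*t) 1 (-31/4))).const_mul (2/9)))
    rw [hd.deriv]
    have e1 : (5 / 2) * (1 + (-2 * t)) + 1 / 4 = -((5 / 2) * (1 + 2 * t) + (-21 / 4)) := by ring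
    have e2 : (5 / 2) * (1 + (-2 * t)) + 11 / 4 = -((5 / 2) * (1 + 2 * t) + (-31 / 4)) := by ring
    rw [e1, e2, dPsi_neg, dPsi_neg]; ring
end
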